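/- Consider the two-stage (preconditioned) MCMC with coarse acceptance probability α_c(η,η_p) = min(1, [I(η|η_p)P_c(η_p)]/[I(η_p|η)P_c(η)]) followed by fine acceptance probability α_f(η,η_p) = min(1, [P_f(η_p)P_c(η)]/[P_f(η)P_c(η_p)]). The effective transition density q(η_p|η) = I(η_p|η)α_c(η,η_p) together with α_f satisfies detailed balance with respect to the fine-scale posterior P_f: P_f(η) q(η_p|η) α_f(η,η_p) = P_f(η_p) q(η|η_p) α_f(η_p,η). -/
import Mathlib


/-- Detailed balance for the two-stage (preconditioned) MCMC: with coarse
acceptance probability `α_c`, fine acceptance probability `α_f`, and effective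
proposal density `q(ηₚ|η) = I(ηₚ|η) α_c(η,ηₚ)`, the chain satisfies detailed
balance with respect to the fine-scale posterior `P_f`:
`P_f(η) q(ηₚ|η) α_f(η,ηₚ) = P_f(ηₚ) q(η|ηₚ) α_f(ηₚ,η)`. -/
theorem stmt15 {X : Type*} (Pc Pf : X → ℝ) (Iprop : X → X → ℝ)
    (hPc : ∀ η, 0 < Pc η) (hPf : ∀ η, 0 < Pf η) (hI : ∀ η ηp, 0 < Iprop η ηp)
    (αc αf : X → X → ℝ)
    (hαc : ∀ η ηp, αc η ηp = min 1 (Iprop η ηp * Pc ηp / (Iprop ηp η * Pc η)))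
    (hαf : ∀ η ηp, αf η ηp = min 1 (Pf ηp * Pc η / (Pf η * Pc ηp)))
    (q : X → X → ℝ)
    (hq : ∀ η ηp, q ηp η = Iprop ηp η * αc η ηp) :
    ∀ η ηp, Pf η * q ηp η * αf η ηp = Pf ηp * q η ηp * αf ηp η := by
  have key : ∀ a b : ℝ, 0 < b → b * min 1 (a / b) = min b a := by
    intro a b hb
    rw [mul_min_of_nonneg _ _ hb.le, mul_one, mul_div_cancel₀ _ hb.ne']
  intro η ηp
  -- detailed balance of q with respect to Pc
  have hdb : Pc η * q ηp η = Pc ηp * q η ηp := by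
    have h1 : Pc η * q ηp η =
        (Iprop ηp η * Pc η) * min 1 (Iprop η ηp * Pc ηp / (Iprop ηp η * Pc η)) := by
      rw [hq, hαc]; ring
    have h2 : Pc ηp * q η ηp =
        (Iprop η ηp * Pc ηp) * min 1 (Iprop ηp η * Pc η / (Iprop η ηp * Pc ηp)) := by
      rw [hq, hαc]; ring
    rw [h1, h2, key _ _ (mul_pos (hI _ _) (hPc _)), key _ _ (mul_pos (hI _ _) (hPc _)), min_comm]
  have hmul : Pc η * Pc ηp * (Pf η * q ηp η * αf η ηp) =
      Pc η * Pc ηp * (Pf ηp * q η ηp * αf ηp η) := by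
    have h1 : Pc η * Pc ηp * (Pf η * q ηp η * αf η ηp) =
        (Pc η * q ηp η) * ((Pf η * Pc ηp) * min 1 (Pf ηp * Pc η / (Pf η * Pc ηp))) := by
      rw [hαf]; ring
    have h2 : Pc η * Pc ηp * (Pf ηp * q η ηp * αf ηp η) =
        (Pc ηp * q η ηp) * ((Pf ηp * Pc η) * min 1 (Pf η * Pc ηp / (Pf ηp * Pc η))) := by
      rw [hαf]; ring
    rw [h1, h2, key _ _ (mul_pos (hPf _) (hPc _)), key _ _ (mul_pos (hPf _) (hPc _)), hdb, min_comm]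
  exact mul_left_cancel₀ (mul_pos (hPc _) (hPc _)).ne' hmul
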